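/- For every natural number L, the sum over pairs of natural numbers (M1, M2) with M2 ≤ M1 and M1 + M2 ≤ L of ( C(L, M1)·C(M1, M2) - C(L, M1 - 1)·C(M1 - 1, M2 - 1) ) · ( L - M1 - M2 + 1 ) equals 3^L, computed in the integers, where the subtracted term is 0 whenever M1 = 0 or M2 = 0 (convention C(n, -1) = 0 and C(-1, k) = 0). -/

import Mathlib

/-- Integer-valued binomial coefficient: `C(n,k)` for integers `n`, `k`, equal to
`Nat.choose` when `0 ≤ k ≤ n` and `0` otherwise. -/
def intChoose (n k : ℤ) : ℤ := if 0 ≤ k ∧ k ≤ n then n.toNat.choose k.toNat else 0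

/-!
Write `d = M₁ - M₂` and `k = M₂`. Then `C(L,M₁)C(M₁,M₂) = C(L,d)C(L-d,k)`, the subtracted term is
`C(L,d)C(L-d,k-1)`, and the weight is `(L-d) - 2k + 1`, so for each `d` the inner sum is the su(2)
completeness sum for `s = L - d` spins, `∑_{2k ≤ s} (C(s,k) - C(s,k-1))(s - 2k + 1) = 2^s`.
The latter holds because each spin-`(s/2 - k)` multiplet contributes one state to each weight
`j ∈ [k, s-k]`, so the states of weight `j` number `∑_{k ≤ min(j, s-j)} (C(s,k) - C(s,k-1)) = C(s,j)`.
Finally `∑_d C(L,d) 2^(L-d) = 3^L`.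
-/

open Finset

lemma intChoose_natCast (n k : ℕ) : intChoose n k = n.choose k := by
  unfold intChoose
  split_ifs with h
  · simp
  · rw [Nat.choose_eq_zero_of_lt (by omega), Nat.cast_zero]

lemma intChoose_of_neg (n : ℤ) {k : ℤ} (hk : k < 0) : intChoose n k = 0 := by
  unfold intChoose
  rw [if_neg (by omega)]

lemma intChoose_add_mul_intChoose (L d : ℕ) (k : ℤ) :
    intChoose L (d + k) * intChoose (d + k) k = L.choose d * intChoose (L - d : ℕ) k := by
  rcases lt_or_ge k 0 with hk | hk
  · simp only [intChoose_of_neg _ hk, mul_zero]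
  · lift k to ℕ using hk
    have hcast : (d : ℤ) + k = (d + k : ℕ) := by push_cast; ring
    rw [hcast]
    simp only [intChoose_natCast]
    rw [← Nat.choose_symm_add, ← Nat.cast_mul, Nat.choose_mul (Nat.le_add_right d k),
      Nat.add_sub_cancel_left, Nat.cast_mul]

lemma sum_range_intChoose_sub (s m : ℕ) :
    ∑ k ∈ range (m + 1), (intChoose s k - intChoose s ((k : ℤ) - 1)) = s.choose m := by
  have := sum_range_sub (fun i : ℕ => intChoose s ((i : ℤ) - 1)) (m + 1)
  push_cast at this
  simp only [add_sub_cancel_right, intChoose_of_neg _ (show (-1 : ℤ) < 0 by norm_num),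
    sub_zero] at this
  rw [this, intChoose_natCast]

lemma sum_intChoose_sub_mul_eq_two_pow (s : ℕ) :
    ∑ k ∈ (range (s + 1)).filter (fun k => 2 * k ≤ s),
      (intChoose s k - intChoose s ((k : ℤ) - 1)) * ((s : ℤ) - 2 * k + 1) = 2 ^ s := by
  set μ : ℕ → ℤ := fun k => intChoose s k - intChoose s ((k : ℤ) - 1)
  have dim_eq_card : ∀ k, 2 * k ≤ s → ((s : ℤ) - 2 * k + 1) = #(Icc k (s - k)) := by
    intro k hk
    rw [Nat.card_Icc]
    omega
  calc ∑ k ∈ (range (s + 1)).filter (fun k => 2 * k ≤ s), μ k * ((s : ℤ) - 2 * k + 1)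
      = ∑ k ∈ (range (s + 1)).filter (fun k => 2 * k ≤ s), ∑ _j ∈ Icc k (s - k), μ k := by
        refine sum_congr rfl fun k hk => ?_
        rw [dim_eq_card k (mem_filter.1 hk).2, sum_const, nsmul_eq_mul, mul_comm]
    _ = ∑ j ∈ range (s + 1), ∑ k ∈ range (min j (s - j) + 1), μ k :=
        sum_comm' fun k j => by simp only [mem_filter, mem_range, mem_Icc]; omega
    _ = ∑ j ∈ range (s + 1), (s.choose j : ℤ) := by
        refine sum_congr rfl fun j hj => ?_
        rw [sum_range_intChoose_sub]
        rcases le_total j (s - j) with h | h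
        · rw [min_eq_left h]
        · rw [min_eq_right h, Nat.choose_symm (by simp at hj; omega)]
    _ = 2 ^ s := by exact_mod_cast Nat.sum_range_choose s

lemma sum_filter_triangle_eq_sum_sum {M : Type*} [AddCommMonoid M] (L : ℕ) (f : ℕ × ℕ → M) :
    ∑ p ∈ (range (L + 1) ×ˢ range (L + 1)).filter (fun p => p.2 ≤ p.1 ∧ p.1 + p.2 ≤ L), f p =
      ∑ d ∈ range (L + 1), ∑ k ∈ (range (L - d + 1)).filter (fun k => 2 * k ≤ L - d),
        f (d + k, k) := by
  rw [sum_sigma']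
  refine sum_nbij' (fun p => ⟨p.1 - p.2, p.2⟩) (fun x => (x.1 + x.2, x.2)) ?_ ?_ ?_ ?_ ?_
  · rintro ⟨m₁, m₂⟩ h
    simp only [mem_sigma, mem_filter, mem_range, mem_product] at h ⊢
    omega
  · rintro ⟨d, k⟩ h
    simp only [mem_sigma, mem_filter, mem_range, mem_product] at h ⊢
    omega
  · rintro ⟨m₁, m₂⟩ h
    simp only [mem_filter] at h
    simp only [Prod.mk.injEq, and_true]
    omega
  · rintro ⟨d, k⟩ _
    simp
  · rintro ⟨m₁, m₂⟩ h
    simp only [mem_filter] at h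
    congr 2
    dsimp only
    omega

lemma su3_summand_eq_choose_mul_su2_summand (L d k : ℕ) (hd : d ≤ L) :
    (intChoose L (d + k : ℕ) * intChoose (d + k : ℕ) k -
        intChoose L (((d + k : ℕ) : ℤ) - 1) * intChoose (((d + k : ℕ) : ℤ) - 1) ((k : ℤ) - 1)) *
      ((L : ℤ) - (d + k : ℕ) - k + 1) =
    L.choose d * ((intChoose (L - d : ℕ) k - intChoose (L - d : ℕ) ((k : ℤ) - 1)) *
      (((L - d : ℕ) : ℤ) - 2 * k + 1)) := by
  have hshift : ((d + k : ℕ) : ℤ) - 1 = d + ((k : ℤ) - 1) := by push_cast; ring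
  rw [hshift, intChoose_add_mul_intChoose, Nat.cast_add, intChoose_add_mul_intChoose,
    Nat.cast_sub hd]
  ring

/-- Completeness of the (α₁+α₂)-partially-twisted spin-1/2 su(3) chain: summing
over pairs `(M₁, M₂)` with `M₂ ≤ M₁` and `M₁ + M₂ ≤ L`,
`∑ (C(L,M₁)C(M₁,M₂) - C(L,M₁-1)C(M₁-1,M₂-1)) (L - M₁ - M₂ + 1) = 3^L`. -/
theorem su3_alpha12_completeness (L : ℕ) :
    ∑ p ∈ (Finset.range (L + 1) ×ˢ Finset.range (L + 1)).filter
        (fun p => p.2 ≤ p.1 ∧ p.1 + p.2 ≤ L),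
        (intChoose L p.1 * intChoose p.1 p.2 -
            intChoose L ((p.1 : ℤ) - 1) * intChoose ((p.1 : ℤ) - 1) ((p.2 : ℤ) - 1)) *
          ((L : ℤ) - p.1 - p.2 + 1) = 3 ^ L := by
  rw [sum_filter_triangle_eq_sum_sum]
  calc _ = ∑ d ∈ range (L + 1), (L.choose d : ℤ) * 2 ^ (L - d) := by
        refine sum_congr rfl fun d hd => ?_
        rw [← sum_intChoose_sub_mul_eq_two_pow, mul_sum]
        exact sum_congr rfl fun k _ =>
          su3_summand_eq_choose_mul_su2_summand L d k (Nat.lt_succ_iff.mp (mem_range.mp hd))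
    _ = 3 ^ L := by
        rw [show (3 : ℤ) = 1 + 2 by norm_num, add_pow]
        exact sum_congr rfl fun d _ => by ring
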